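/- arXiv:cond-mat/0702145 — 4 statements merged into one kernel-verified Lean document; each statement's English description precedes it below -/
import Mathlib

section
/- The GG model is critical in the following sense: there exists an initial set A₀ ⊆ ℤ² such that both A₀ and its complement ℤ² \ A₀ are infinite and ⟨A₀⟩ = ℤ². -/
open MeasureTheory Set

abbrev Site : Type := ℤ × ℤ
abbrev Config : Type := Site → Bool

def ggN : Set Site := {(1,0), (2,0), (-1,0), (-2,0), (0,1), (0,-1)}

def ggT (A : Set Site) : Set Site :=
  A ∪ {x : Site | 3 ≤ (((x + ·) '' ggN) ∩ A).ncard}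

def ggClosure (A : Set Site) : Set Site := ⋃ n : ℕ, ggT^[n] A

def ggTRes (V A : Set Site) : Set Site :=
  A ∪ {x : Site | x ∈ V ∧ 3 ≤ (((x + ·) '' ggN) ∩ A).ncard}

def ggClosureRes (V A : Set Site) : Set Site := ⋃ n : ℕ, (ggTRes V)^[n] A

def InternallySpanned (V A₀ : Set Site) : Prop :=
  ggClosureRes V (A₀ ∩ V) = V

def occupied (ω : Config) : Set Site := {x | ω x = true}

def IsBernoulli (p : ℝ) (μ : Measure Config) : Prop :=
  IsProbabilityMeasure μ ∧
  ProbabilityTheory.iIndepFun (fun (x : Site) (ω : Config) => ω x) μ ∧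
  ∀ x : Site, μ {ω | ω x = true} = ENNReal.ofReal p

/-! Occupy every site off the column `{0} × ℤ`. A site of that column then has its three
horizontal neighbours `x + (1,0)`, `x + (2,0)`, `x - (1,0)` occupied, so a single step of `ggT`
fills the column, while both the initial set and its complement contain a whole column. -/

lemma ggN_finite : ggN.Finite := by
  simp only [ggN]
  exact (((((finite_singleton _).insert _).insert _).insert _).insert _).insert _

lemma mem_ggT_of_horizontal_mem {A : Set Site} {x : Site} (h₁ : x + (1, 0) ∈ A)
    (h₂ : x + (2, 0) ∈ A) (h₃ : x + (-1, 0) ∈ A) : x ∈ ggT A := by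
  right
  have hsub : ({x + (1, 0), x + (2, 0), x + (-1, 0)} : Set Site) ⊆ ((x + ·) '' ggN) ∩ A := by
    rintro p (rfl | rfl | rfl)
    · exact ⟨⟨(1, 0), by simp [ggN], rfl⟩, h₁⟩
    · exact ⟨⟨(2, 0), by simp [ggN], rfl⟩, h₂⟩
    · exact ⟨⟨(-1, 0), by simp [ggN], rfl⟩, h₃⟩
  have hcard : ({x + (1, 0), x + (2, 0), x + (-1, 0)} : Set Site).ncard = 3 :=
    ncard_eq_three.mpr ⟨_, _, _, by simp, by simp, by simp, rfl⟩
  calc 3 = _ := hcard.symm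
    _ ≤ _ := ncard_le_ncard hsub ((ggN_finite.image _).inter_of_left A)

lemma ggT_subset_ggClosure (A : Set Site) : ggT A ⊆ ggClosure A :=
  subset_iUnion (fun n => ggT^[n] A) 1

lemma infinite_setOf_fst_eq (a : ℤ) : {p : Site | p.1 = a}.Infinite :=
  infinite_of_injective_forall_mem (Prod.mk_right_injective a) fun _ => rfl

theorem gg_critical :
    ∃ A₀ : Set Site, A₀.Infinite ∧ A₀ᶜ.Infinite ∧ ggClosure A₀ = Set.univ := by
  refine ⟨{p | p.1 ≠ 0}, ?_, ?_, ?_⟩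
  · exact (infinite_setOf_fst_eq 1).mono fun p (hp : p.1 = 1) => by simp [hp]
  · simpa only [compl_ofPred, not_not] using infinite_setOf_fst_eq 0
  · refine eq_univ_of_forall fun x => ggT_subset_ggClosure _ ?_
    by_cases hx : x.1 = 0
    · exact mem_ggT_of_horizontal_mem (by simp [hx]) (by simp [hx]) (by simp [hx])
    · exact Or.inl hx
end

section
/- Horizontal growth of the GG model from an occupied rectangle: let a ≤ b and c ≤ d be integers with b − a ≥ 1, let R = ([a,b] × [c,d]) ∩ ℤ², and suppose A ⊇ R. If there exists y ∈ [c,d] such that (b+1, y) ∈ A or (b+2, y) ∈ A, then the whole adjacent column segment {b+1} × ([c,d] ∩ ℤ) is contained in ⟨A⟩ (and symmetrically for growth in the Western direction). -/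
open MeasureTheory Set

lemma monotone_ggT_iterate (A : Set Site) : Monotone (fun n => ggT^[n] A) :=
  monotone_nat_of_le_succ fun n => by
    rw [Function.iterate_succ_apply']
    exact subset_union_left

lemma subset_ggClosure (A : Set Site) : A ⊆ ggClosure A :=
  subset_iUnion (fun n => ggT^[n] A) 0

/-- A site has only finitely many neighbours, so those occupied in the closure are already occupied
at some finite stage. -/
lemma ggT_ggClosure_subset (A : Set Site) : ggT (ggClosure A) ⊆ ggClosure A := by
  rintro x (hx | hx)
  · exact hx
  set S := ((x + ·) '' ggN) ∩ ggClosure A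
  have hS : S.Finite := (ggN_finite.image _).inter_of_left _
  obtain ⟨n, hn⟩ : ∃ n, (hS.toFinset : Set Site) ⊆ ggT^[n] A :=
    (monotone_ggT_iterate A).directed_le.exists_mem_subset_of_finset_subset_biUnion
      (by rw [Finite.coe_toFinset]; exact inter_subset_right)
  rw [Finite.coe_toFinset] at hn
  refine mem_iUnion.2 ⟨n + 1, ?_⟩
  rw [Function.iterate_succ_apply']
  refine Or.inr (hx.trans (ncard_le_ncard (subset_inter inter_subset_left hn) ?_))
  exact (ggN_finite.image _).inter_of_left _

lemma mem_ggT_of_three (B : Set Site) {x u v w : Site}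
    (hu : u ∈ ggN) (hv : v ∈ ggN) (hw : w ∈ ggN) (huv : u ≠ v) (huw : u ≠ w) (hvw : v ≠ w)
    (mu : x + u ∈ B) (mv : x + v ∈ B) (mw : x + w ∈ B) : x ∈ ggT B := by
  refine Or.inr ?_
  have hcard : ({x + u, x + v, x + w} : Set Site).ncard = 3 :=
    ncard_eq_three.2 ⟨_, _, _, by simpa using huv, by simpa using huw, by simpa using hvw, rfl⟩
  rw [← hcard]
  refine ncard_le_ncard ?_ ((ggN_finite.image _).inter_of_left _)
  rintro z (rfl | rfl | rfl)
  exacts [⟨⟨u, hu, rfl⟩, mu⟩, ⟨⟨v, hv, rfl⟩, mv⟩, ⟨⟨w, hw, rfl⟩, mw⟩]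

lemma mem_ggClosure_of_horizontal_pair (A : Set Site) {σ : ℤ} (hσ : σ = 1 ∨ σ = -1)
    {x w : Site} (hw : w ∈ ggN) (hw₁ : w.1 ≠ σ) (hw₂ : w.1 ≠ 2 * σ)
    (h₁ : x + (σ, 0) ∈ ggClosure A) (h₂ : x + (2 * σ, 0) ∈ ggClosure A)
    (h : x + w ∈ ggClosure A) : x ∈ ggClosure A := by
  refine ggT_ggClosure_subset A (mem_ggT_of_three _ ?_ ?_ hw ?_ ?_ ?_ h₁ h₂ h)
  · rcases hσ with rfl | rfl <;> simp [ggN]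
  · rcases hσ with rfl | rfl <;> simp [ggN]
  · rcases hσ with rfl | rfl <;> simp
  · exact fun h => hw₁ (congrArg Prod.fst h).symm
  · exact fun h => hw₂ (congrArg Prod.fst h).symm

lemma Int.forall_mem_Icc_of_spread {P : ℤ → Prop} {c d y₀ : ℤ} (hy₀ : y₀ ∈ Icc c d)
    (h₀ : P y₀) (hdown : ∀ y ∈ Icc c d, P (y + 1) → P y)
    (hup : ∀ y ∈ Icc c d, P (y - 1) → P y) : ∀ y ∈ Icc c d, P y := by
  obtain ⟨hc₀, hd₀⟩ := hy₀
  rintro y ⟨hcy, hyd⟩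
  rcases le_total y₀ y with h | h
  · induction y, h using Int.leInduction with
    | base => exact h₀
    | succ n hn ih => exact hup (n + 1) ⟨by omega, hyd⟩ (by simpa using ih (by omega) (by omega))
  · induction y, h using Int.leInductionDown with
    | base => exact h₀
    | pred n hn ih => exact hdown (n - 1) ⟨hcy, by omega⟩ (by simpa using ih (by omega) (by omega))

lemma column_subset_ggClosure (A : Set Site) {e c d σ : ℤ} (hσ : σ = 1 ∨ σ = -1)
    (hside : ∀ y ∈ Icc c d, ((e + σ, y) : Site) ∈ A ∧ ((e + 2 * σ, y) : Site) ∈ A)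
    (hseed : ∃ y ∈ Icc c d, ((e, y) : Site) ∈ A ∨ ((e - σ, y) : Site) ∈ A) :
    ({e} : Set ℤ) ×ˢ Icc c d ⊆ ggClosure A := by
  have hσ₀ : σ ≠ 0 := by omega
  have grow : ∀ y ∈ Icc c d, ∀ w ∈ ggN, w.1 = 0 →
      ((e, y) : Site) + w ∈ ggClosure A → ((e, y) : Site) ∈ ggClosure A := fun y hy w hw hw₀ h =>
    mem_ggClosure_of_horizontal_pair A hσ hw (by omega) (by omega)
      (subset_ggClosure A (by simpa using (hside y hy).1))
      (subset_ggClosure A (by simpa using (hside y hy).2)) h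
  obtain ⟨y₀, hy₀, hA⟩ := hseed
  have h₀ : ((e, y₀) : Site) ∈ ggClosure A := by
    rcases hA with h | h
    · exact subset_ggClosure A h
    · refine mem_ggClosure_of_horizontal_pair A hσ (w := (-σ, 0)) ?_ (by dsimp only; omega)
        (by dsimp only; omega) (subset_ggClosure A (by simpa using (hside y₀ hy₀).1))
        (subset_ggClosure A (by simpa using (hside y₀ hy₀).2))
        (subset_ggClosure A (by simpa [← sub_eq_add_neg] using h))
      rcases hσ with rfl | rfl <;> simp [ggN]
  rintro ⟨x, y⟩ ⟨rfl, hy⟩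
  refine Int.forall_mem_Icc_of_spread (P := fun y => ((x, y) : Site) ∈ ggClosure A) hy₀ h₀
    (fun y hy h => grow y hy (0, 1) (by simp [ggN]) rfl (by simpa using h))
    (fun y hy h => grow y hy (0, -1) (by simp [ggN]) rfl (by simpa [← sub_eq_add_neg] using h))
    y hy

theorem gg_horizontal_growth_general (a b c d : ℤ) (hab : 1 ≤ b - a)
    (A : Set Site) (hR : Set.Icc a b ×ˢ Set.Icc c d ⊆ A) :
    ((∃ y ∈ Set.Icc c d, ((b+1, y) : Site) ∈ A ∨ ((b+2, y) : Site) ∈ A) →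
        ({b+1} : Set ℤ) ×ˢ Set.Icc c d ⊆ ggClosure A) ∧
    ((∃ y ∈ Set.Icc c d, ((a-1, y) : Site) ∈ A ∨ ((a-2, y) : Site) ∈ A) →
        ({a-1} : Set ℤ) ×ˢ Set.Icc c d ⊆ ggClosure A) := by
  have hcol : ∀ x ∈ Icc a b, ∀ y ∈ Icc c d, ((x, y) : Site) ∈ A := fun x hx y hy =>
    hR (mk_mem_prod hx hy)
  constructor
  · rintro ⟨y, hy, hA⟩
    refine column_subset_ggClosure A (σ := -1) (Or.inr rfl)
      (fun y hy => ⟨hcol _ ⟨by omega, by omega⟩ y hy, hcol _ ⟨by omega, by omega⟩ y hy⟩)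
      ⟨y, hy, ?_⟩
    rwa [sub_neg_eq_add, add_assoc, one_add_one_eq_two]
  · rintro ⟨y, hy, hA⟩
    refine column_subset_ggClosure A (σ := 1) (Or.inl rfl)
      (fun y hy => ⟨hcol _ ⟨by omega, by omega⟩ y hy, hcol _ ⟨by omega, by omega⟩ y hy⟩)
      ⟨y, hy, ?_⟩
    rwa [sub_sub, one_add_one_eq_two]

theorem gg_horizontal_growth (a b c d : ℤ) (hab : 1 ≤ b - a) (hcd : c ≤ d)
    (A : Set Site) (hR : Set.Icc a b ×ˢ Set.Icc c d ⊆ A) :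
    ((∃ y ∈ Set.Icc c d, ((b+1, y) : Site) ∈ A ∨ ((b+2, y) : Site) ∈ A) →
        ({b+1} : Set ℤ) ×ˢ Set.Icc c d ⊆ ggClosure A) ∧
    ((∃ y ∈ Set.Icc c d, ((a-1, y) : Site) ∈ A ∨ ((a-2, y) : Site) ∈ A) →
        ({a-1} : Set ℤ) ×ˢ Set.Icc c d ⊆ ggClosure A) :=
  gg_horizontal_growth_general a b c d hab A hR
end

section
/- Vertical growth of the GG model from an occupied rectangle: let a ≤ b and c ≤ d be integers, let R = ([a,b] × [c,d]) ∩ ℤ², and suppose A ⊇ R. If there exist x₁, x₂ ∈ [a,b] with 1 ≤ x₂ − x₁ ≤ 4 such that (x₁, d+1) ∈ A and (x₂, d+1) ∈ A (two occupied sites in the adjacent row with no more than 3 empty sites in between), then the whole adjacent row segment ([a,b] ∩ ℤ) × {d+1} is contained in ⟨A⟩ (and symmetrically for growth in the Southern direction). -/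
open MeasureTheory Set

lemma horizontal_mem_ggN {i : ℤ} (hi : i ∈ ({-2, -1, 1, 2} : Set ℤ)) :
    ((i, 0) : Site) ∈ ggN := by
  simp only [mem_insert_iff, mem_singleton_iff] at hi
  rcases hi with rfl | rfl | rfl | rfl <;> simp [ggN]

lemma subset_ggT (A : Set Site) : A ⊆ ggT A := subset_union_left

lemma ggT_mono {A B : Set Site} (h : A ⊆ B) : ggT A ⊆ ggT B :=
  union_subset_union h fun _ hx =>
    hx.trans (ncard_le_ncard (inter_subset_inter_right _ h) ((ggN_finite.image _).inter_of_left _))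

lemma ggT_iterate_mono (A : Set Site) : Monotone fun n => ggT^[n] A := by
  refine monotone_nat_of_le_succ fun n => ?_
  rw [Function.iterate_succ_apply']
  exact subset_ggT _

lemma mem_ggClosure_of_three {A : Set Site} {x u v w : Site}
    (hu : u ∈ ggN) (hv : v ∈ ggN) (hw : w ∈ ggN) (huv : u ≠ v) (huw : u ≠ w) (hvw : v ≠ w)
    (h₁ : x + u ∈ ggClosure A) (h₂ : x + v ∈ ggClosure A) (h₃ : x + w ∈ ggClosure A) :
    x ∈ ggClosure A := by
  obtain ⟨n₁, h₁⟩ := mem_iUnion.mp h₁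
  obtain ⟨n₂, h₂⟩ := mem_iUnion.mp h₂
  obtain ⟨n₃, h₃⟩ := mem_iUnion.mp h₃
  set N := max n₁ (max n₂ n₃)
  have hsub : ({x + u, x + v, x + w} : Set Site) ⊆ ((x + ·) '' ggN) ∩ ggT^[N] A := by
    rintro y (rfl | rfl | rfl)
    · exact ⟨⟨u, hu, rfl⟩, ggT_iterate_mono A (by omega) h₁⟩
    · exact ⟨⟨v, hv, rfl⟩, ggT_iterate_mono A (by omega) h₂⟩
    · exact ⟨⟨w, hw, rfl⟩, ggT_iterate_mono A (by omega) h₃⟩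
  have hcard : ({x + u, x + v, x + w} : Set Site).ncard = 3 :=
    ncard_eq_three.mpr ⟨_, _, _, by simpa using huv, by simpa using huw, by simpa using hvw, rfl⟩
  refine mem_iUnion.mpr ⟨N + 1, ?_⟩
  rw [Function.iterate_succ_apply']
  exact Or.inr (hcard ▸ ncard_le_ncard hsub ((ggN_finite.image _).inter_of_left _))

section OneDimensional

variable {S : Set ℤ} {a b : ℤ}
  (hfill : ∀ x ∈ Icc a b, ∀ y₁ ∈ S, ∀ y₂ ∈ S, y₁ ≠ y₂ →
    y₁ - x ∈ ({-2, -1, 1, 2} : Set ℤ) → y₂ - x ∈ ({-2, -1, 1, 2} : Set ℤ) → x ∈ S)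
include hfill

lemma Icc_subset_of_adjacent_mem {y : ℤ} (hay : a ≤ y) (hyb : y + 1 ≤ b)
    (hy : y ∈ S) (hy₁ : y + 1 ∈ S) : Icc a b ⊆ S := by
  have left : ∀ n ≤ y, a ≤ n → n ∈ S ∧ n + 1 ∈ S := by
    refine Int.leInductionDown (fun _ => ⟨hy, hy₁⟩) fun n hny ih han => ?_
    obtain ⟨hn, hn₁⟩ := ih (by omega)
    refine ⟨hfill (n - 1) ⟨han, by omega⟩ n hn (n + 1) hn₁ (by omega) (by simp) ?_, by simpa⟩
    simp [show n + 1 - (n - 1) = 2 by ring]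
  have right : ∀ n, y + 1 ≤ n → n ≤ b → n - 1 ∈ S ∧ n ∈ S := by
    refine Int.leInduction (fun _ => ⟨by simpa, hy₁⟩) fun n hyn ih hnb => ?_
    obtain ⟨hn₁, hn⟩ := ih (by omega)
    refine ⟨by simpa, hfill (n + 1) ⟨by omega, hnb⟩ n hn (n - 1) hn₁ (by omega) (by simp) ?_⟩
    simp [show n - 1 - (n + 1) = -2 by ring]
  intro x ⟨hax, hxb⟩
  rcases le_or_gt x y with hxy | hxy
  · exact (left x hxy hax).1
  · exact (right x (by omega) hxb).2

lemma add_one_mem_of_gap_le_four {x₁ x₂ : ℤ} (h₁ : x₁ ∈ Icc a b) (h₂ : x₂ ∈ Icc a b)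
    (hx₁ : x₁ ∈ S) (hx₂ : x₂ ∈ S) (hgap : 1 ≤ x₂ - x₁) (hgap' : x₂ - x₁ ≤ 4) :
    x₁ + 1 ∈ S := by
  obtain ⟨ha₁, -⟩ := h₁
  obtain ⟨-, hb₂⟩ := h₂
  have hmid : ∀ k : ℤ, k - x₁ ∈ ({1, 2} : Set ℤ) → x₂ - k ∈ ({1, 2} : Set ℤ) → k ∈ S := by
    intro k hk hk'
    refine hfill k ⟨?_, ?_⟩ x₁ hx₁ x₂ hx₂ (by omega) ?_ ?_ <;>
      simp only [mem_insert_iff, mem_singleton_iff] at hk hk' ⊢ <;> omega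
  obtain h | h | h | h : x₂ - x₁ = 1 ∨ x₂ - x₁ = 2 ∨ x₂ - x₁ = 3 ∨ x₂ - x₁ = 4 := by omega
  · exact (show x₁ + 1 = x₂ by omega) ▸ hx₂
  · exact hmid _ (by simp) (by simp; omega)
  · exact hmid _ (by simp) (by simp; omega)
  · have hx₁₂ : x₁ + 2 ∈ S := hmid _ (by simp) (by simp; omega)
    exact hfill _ ⟨by omega, by omega⟩ x₁ hx₁ (x₁ + 2) hx₁₂ (by omega) (by simp) (by simp)

end OneDimensional

lemma row_subset_ggClosure {A : Set Site} {a b r s x₁ x₂ : ℤ} (hs : ((0, s) : Site) ∈ ggN)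
    (hbase : Icc a b ×ˢ {r + s} ⊆ ggClosure A) (h₁ : x₁ ∈ Icc a b) (h₂ : x₂ ∈ Icc a b)
    (hgap : 1 ≤ x₂ - x₁) (hgap' : x₂ - x₁ ≤ 4)
    (hx₁ : ((x₁, r) : Site) ∈ ggClosure A) (hx₂ : ((x₂, r) : Site) ∈ ggClosure A) :
    Icc a b ×ˢ {r} ⊆ ggClosure A := by
  set S := {y : ℤ | ((y, r) : Site) ∈ ggClosure A}
  have hfill : ∀ x ∈ Icc a b, ∀ y₁ ∈ S, ∀ y₂ ∈ S, y₁ ≠ y₂ →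
      y₁ - x ∈ ({-2, -1, 1, 2} : Set ℤ) → y₂ - x ∈ ({-2, -1, 1, 2} : Set ℤ) → x ∈ S := by
    intro x hx y₁ hy₁ y₂ hy₂ hne hd₁ hd₂
    have hne₁ : y₁ - x ≠ 0 := by rintro h; simp [h] at hd₁
    have hne₂ : y₂ - x ≠ 0 := by rintro h; simp [h] at hd₂
    refine mem_ggClosure_of_three (u := (y₁ - x, 0)) (v := (y₂ - x, 0)) (w := (0, s))
      (horizontal_mem_ggN hd₁) (horizontal_mem_ggN hd₂) hs ?_ ?_ ?_ ?_ ?_ ?_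
    · simp only [ne_eq, Prod.mk.injEq, and_true]; omega
    · simp [hne₁]
    · simp [hne₂]
    · rwa [show ((x, r) + (y₁ - x, 0) : Site) = (y₁, r) by simp]
    · rwa [show ((x, r) + (y₂ - x, 0) : Site) = (y₂, r) by simp]
    · simpa using hbase (mk_mem_prod hx rfl)
  have hrow : Icc a b ⊆ S := Icc_subset_of_adjacent_mem hfill h₁.1 (by linarith [h₂.2]) hx₁
    (add_one_mem_of_gap_le_four hfill h₁ h₂ hx₁ hx₂ hgap hgap')
  rintro ⟨x, _⟩ ⟨hx, rfl⟩
  exact hrow hx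

theorem gg_vertical_growth_general (a b c d : ℤ) (hcd : c ≤ d)
    (A : Set Site) (hR : Set.Icc a b ×ˢ Set.Icc c d ⊆ A) :
    ((∃ x₁ ∈ Set.Icc a b, ∃ x₂ ∈ Set.Icc a b, 1 ≤ x₂ - x₁ ∧ x₂ - x₁ ≤ 4 ∧
        ((x₁, d+1) : Site) ∈ A ∧ ((x₂, d+1) : Site) ∈ A) →
        Set.Icc a b ×ˢ ({d+1} : Set ℤ) ⊆ ggClosure A) ∧
    ((∃ x₁ ∈ Set.Icc a b, ∃ x₂ ∈ Set.Icc a b, 1 ≤ x₂ - x₁ ∧ x₂ - x₁ ≤ 4 ∧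
        ((x₁, c-1) : Site) ∈ A ∧ ((x₂, c-1) : Site) ∈ A) →
        Set.Icc a b ×ˢ ({c-1} : Set ℤ) ⊆ ggClosure A) := by
  have hrect : Icc a b ×ˢ Icc c d ⊆ ggClosure A := hR.trans (subset_ggClosure A)
  refine ⟨?_, ?_⟩ <;> rintro ⟨x₁, h₁, x₂, h₂, hgap, hgap', hx₁, hx₂⟩
  · refine row_subset_ggClosure (s := -1) (by simp [ggN]) ?_ h₁ h₂ hgap hgap'
      (subset_ggClosure A hx₁) (subset_ggClosure A hx₂)
    rintro ⟨x, _⟩ ⟨hx, rfl⟩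
    exact hrect ⟨hx, by simpa using hcd⟩
  · refine row_subset_ggClosure (s := 1) (by simp [ggN]) ?_ h₁ h₂ hgap hgap'
      (subset_ggClosure A hx₁) (subset_ggClosure A hx₂)
    rintro ⟨x, _⟩ ⟨hx, rfl⟩
    exact hrect ⟨hx, by simpa using hcd⟩

theorem gg_vertical_growth (a b c d : ℤ) (hab : a ≤ b) (hcd : c ≤ d)
    (A : Set Site) (hR : Set.Icc a b ×ˢ Set.Icc c d ⊆ A) :
    ((∃ x₁ ∈ Set.Icc a b, ∃ x₂ ∈ Set.Icc a b, 1 ≤ x₂ - x₁ ∧ x₂ - x₁ ≤ 4 ∧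
        ((x₁, d+1) : Site) ∈ A ∧ ((x₂, d+1) : Site) ∈ A) →
        Set.Icc a b ×ˢ ({d+1} : Set ℤ) ⊆ ggClosure A) ∧
    ((∃ x₁ ∈ Set.Icc a b, ∃ x₂ ∈ Set.Icc a b, 1 ≤ x₂ - x₁ ∧ x₂ - x₁ ≤ 4 ∧
        ((x₁, c-1) : Site) ∈ A ∧ ((x₂, c-1) : Site) ∈ A) →
        Set.Icc a b ×ˢ ({c-1} : Set ℤ) ⊆ ggClosure A) :=
  gg_vertical_growth_general a b c d hcd A hR
end

section
/- Analytic inequality for the vertical-line factor: for every C₂ > 0 and every c with 0 < c < C₂/2 there exists p₀ > 0 such that for all 0 < p < p₀, (1 − (1−p²)^{p^{−3/2}})^{(C₂/p)·log(1/p)} ≤ exp(−c · (1/p) · (log(1/p))²). -/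
open MeasureTheory Set

/-!
Bernoulli's inequality gives `1 - (1 - p²)^k ≤ k p² = p^(1/2)` for `k = p^(-3/2) ≥ 1`, and raising
`p^(1/2)` to the power `l = (C₂/p) log(1/p)` gives exactly `exp (-(C₂/2) (1/p) log²(1/p))`.
Since `c < C₂/2` this already holds for every `p < 1`.
-/

open Real

theorem one_sub_one_sub_rpow_le {x k : ℝ} (hx : x ≤ 1) (hk : 1 ≤ k) :
    1 - (1 - x) ^ k ≤ k * x := by
  have := one_add_mul_self_le_rpow_one_add (s := -x) (by linarith) hk
  rw [← sub_eq_add_neg] at this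
  linarith

theorem one_sub_one_sub_sq_rpow_le_sqrt {p : ℝ} (hp₀ : 0 < p) (hp₁ : p ≤ 1) :
    1 - (1 - p ^ 2) ^ (p ^ (-(3:ℝ)/2)) ≤ p ^ ((1:ℝ)/2) := by
  have hk : 1 ≤ p ^ (-(3:ℝ)/2) :=
    one_le_rpow_of_pos_of_le_one_of_nonpos hp₀ hp₁ (by norm_num)
  have hexp : p ^ (-(3:ℝ)/2) * p ^ 2 = p ^ ((1:ℝ)/2) := by
    rw [← rpow_natCast, ← rpow_add hp₀]
    norm_num
  calc 1 - (1 - p ^ 2) ^ (p ^ (-(3:ℝ)/2)) ≤ p ^ (-(3:ℝ)/2) * p ^ 2 :=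
        one_sub_one_sub_rpow_le (by nlinarith) hk
    _ = p ^ ((1:ℝ)/2) := hexp

theorem sqrt_rpow_mul_log_inv {p : ℝ} (hp : 0 < p) (C : ℝ) :
    (p ^ ((1:ℝ)/2)) ^ ((C / p) * log (1 / p)) = exp (-(C / 2 * (1 / p) * log (1 / p) ^ 2)) := by
  rw [← rpow_mul hp.le, rpow_def_of_pos hp, one_div p, log_inv]
  ring_nf

theorem gg_vertical_factor_bound_general (C₂ : ℝ) (hC₂ : 0 < C₂) (c : ℝ)
    (hcC : c < C₂/2) :
    ∃ p₀ : ℝ, 0 < p₀ ∧ ∀ p : ℝ, 0 < p → p < p₀ →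
      (1 - (1-p^2) ^ (p ^ (-(3:ℝ)/2))) ^ ((C₂/p) * Real.log (1/p)) ≤
        Real.exp (-(c * (1/p) * (Real.log (1/p))^2)) := by
  refine ⟨1, one_pos, fun p hp₀ hp₁ => ?_⟩
  have hq : (1 - p ^ 2) ^ (p ^ (-(3:ℝ)/2)) ≤ 1 :=
    rpow_le_one (by nlinarith) (by nlinarith) (rpow_nonneg hp₀.le _)
  have hl : 0 ≤ (C₂ / p) * log (1 / p) :=
    mul_nonneg (by positivity) (log_nonneg (by rw [le_div_iff₀ hp₀]; linarith))
  calc (1 - (1 - p ^ 2) ^ (p ^ (-(3:ℝ)/2))) ^ ((C₂ / p) * log (1 / p))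
      ≤ (p ^ ((1:ℝ)/2)) ^ ((C₂ / p) * log (1 / p)) :=
        rpow_le_rpow (by linarith) (one_sub_one_sub_sq_rpow_le_sqrt hp₀ hp₁.le) hl
    _ = exp (-(C₂ / 2 * (1 / p) * log (1 / p) ^ 2)) := sqrt_rpow_mul_log_inv hp₀ C₂
    _ ≤ exp (-(c * (1 / p) * log (1 / p) ^ 2)) := by
        gcongr

theorem gg_vertical_factor_bound (C₂ : ℝ) (hC₂ : 0 < C₂) (c : ℝ) (hc : 0 < c)
    (hcC : c < C₂/2) :
    ∃ p₀ : ℝ, 0 < p₀ ∧ ∀ p : ℝ, 0 < p → p < p₀ →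
      (1 - (1-p^2) ^ (p ^ (-(3:ℝ)/2))) ^ ((C₂/p) * Real.log (1/p)) ≤
        Real.exp (-(c * (1/p) * (Real.log (1/p))^2)) :=
  gg_vertical_factor_bound_general C₂ hC₂ c hcC
end
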